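/- Let σ₁,…,σ_d be pairwise distinct branches of 𝒯 and ρ ∈ ℕ be such that the final segments σ_{1,>ρ},…,σ_{d,>ρ} are pairwise incomparable. Then for every finitely supported vector x with min(supp x) > ρ and supp x ⊆ σ₁ ∪ ⋯ ∪ σ_d, one has ‖x‖ = ‖x|_{σ₁} + ⋯ + x|_{σ_d}‖ = (∑_{i=1}^d ‖x|_{σ_i}‖^p)^{1/p}, where ‖·‖ is the JT_{2,p} norm. -/

import Mathlib

open Set Filter Topology

/-- `k` is an immediate successor of `n` in the order `le`. -/
def ImmSucc (le : ℕ → ℕ → Prop) (n k : ℕ) : Prop :=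
  le n k ∧ n ≠ k ∧ ∀ m, le n m → le m k → m = n ∨ m = k

/-- The tree `𝒯`: a partial order on `ℕ` compatible with the usual order, in which the set of
strict predecessors of every element is finite and linearly ordered, and every element has
infinitely many immediate successors. -/
structure IsJTTree (le : ℕ → ℕ → Prop) : Prop where
  refl : ∀ n, le n n
  antisymm : ∀ {m n}, le m n → le n m → m = n
  trans : ∀ {a b c}, le a b → le b c → le a c
  compat : ∀ {m n}, le m n → m ≤ n
  pred_finite : ∀ n, {m | le m n ∧ m ≠ n}.Finite
  pred_linear : ∀ n a b, le a n → le b n → le a b ∨ le b a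
  succ_infinite : ∀ n, {k | ImmSucc le n k}.Infinite

/-- A segment of the tree: a nonempty set of the form `{k : m ⪯ k ∧ k ⪯ n}`. -/
def IsSegment (le : ℕ → ℕ → Prop) (s : Set ℕ) : Prop :=
  ∃ m n, le m n ∧ s = {k | le m k ∧ le k n}

/-- A branch: a maximal linearly ordered subset of `ℕ`. -/
def IsBranch (le : ℕ → ℕ → Prop) (σ : Set ℕ) : Prop :=
  IsChain le σ ∧ ∀ τ, IsChain le τ → σ ⊆ τ → σ = τ

/-- `‖x‖_s = (∑_{i ∈ s} x(i)²)^(1/2)`. -/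
noncomputable def segNorm (x : ℕ → ℝ) (s : Set ℕ) : ℝ :=
  Real.sqrt (∑' i, s.indicator (fun j => (x j) ^ 2) i)

/-- The `JT_{2,p}` norm on finitely supported sequences:
`‖x‖ = sup {(∑_k ‖x‖_{s_k}^p)^(1/p) : s₁,…,s_n pairwise disjoint segments}`. -/
noncomputable def jtNorm (le : ℕ → ℕ → Prop) (p : ℝ) (x : ℕ → ℝ) : ℝ :=
  sSup { r : ℝ | ∃ (n : ℕ) (s : Fin n → Set ℕ),
    (∀ k, IsSegment le (s k)) ∧
    (∀ k l, k ≠ l → Disjoint (s k) (s l)) ∧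
    r = (∑ k : Fin n, segNorm x (s k) ^ p) ^ (1 / p) }

/-- A block sequence of finitely supported vectors. -/
def IsBlockSeq (x : ℕ → ℕ → ℝ) : Prop :=
  (∀ n, (Function.support (x n)).Finite) ∧
  ∀ n i j, x n i ≠ 0 → x (n + 1) j ≠ 0 → i < j

/-- The final segment `σ_{>l} = {k ∈ σ : k > l}`. -/
def finalSeg (σ : Set ℕ) (l : ℕ) : Set ℕ := {k ∈ σ | l < k}

/-- Two final segments are incomparable when their least elements are `le`-incomparable. -/
def IncompFinal (le : ℕ → ℕ → Prop) (A B : Set ℕ) : Prop :=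
  A.Nonempty ∧ B.Nonempty ∧ ¬ le (sInf A) (sInf B) ∧ ¬ le (sInf B) (sInf A)

/-!
Beyond `ρ` the branches `σᵢ` are pairwise incomparable, so no element of `σᵢ` above `ρ` lies
below an element of `σⱼ` above `ρ` for `i ≠ j`. A segment is a chain, hence it meets the
support of `x` inside a single branch. For disjoint segments `s_k` this gives
`∑ₖ ‖x‖_{s_k}^p ≤ ∑ᵢ ∑ₖ ‖x‖_{s_k ∩ σᵢ}^p ≤ ∑ᵢ (∑ₖ ‖x‖_{s_k ∩ σᵢ}²)^{p/2} ≤ ∑ᵢ ‖x‖_{σᵢ}^p`,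
using `p ≥ 2` in the middle step. Conversely, the segments of `σᵢ` spanned by the support of `x`
on `σᵢ` are pairwise disjoint and attain this bound.
-/

lemma Real.sum_rpow_le_rpow_sum {ι : Type*} (J : Finset ι) {f : ι → ℝ} (hf : ∀ i ∈ J, 0 ≤ f i)
    {q : ℝ} (hq : 1 ≤ q) : ∑ i ∈ J, f i ^ q ≤ (∑ i ∈ J, f i) ^ q := by
  induction J using Finset.cons_induction with
  | empty => simp [Real.zero_rpow (by linarith : q ≠ 0)]
  | cons a J ha ih =>
    simp only [Finset.mem_cons, forall_eq_or_imp] at hf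
    rw [Finset.sum_cons, Finset.sum_cons]
    calc f a ^ q + ∑ i ∈ J, f i ^ q ≤ f a ^ q + (∑ i ∈ J, f i) ^ q := by gcongr; exact ih hf.2
      _ ≤ (f a + ∑ i ∈ J, f i) ^ q :=
        Real.add_rpow_le_rpow_add hf.1 (Finset.sum_nonneg hf.2) hq

lemma sum_indicator_apply_eq_self {ι α M : Type*} [Fintype ι] [AddCommMonoid M]
    {s : ι → Set α} {f : α → M} {a : α} (h : f a ≠ 0 → ∃! i, a ∈ s i) :
    ∑ i, (s i).indicator f a = f a := by
  by_cases ha : f a = 0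
  · rw [ha]
    exact Finset.sum_eq_zero fun i _ => by simp [ha]
  obtain ⟨i, hi, huniq⟩ := h ha
  rw [Finset.sum_eq_single i (fun j _ hji => indicator_of_notMem (fun hj => hji (huniq j hj)) _)
    (by simp), indicator_of_mem hi]

section SegNorm

variable {x : ℕ → ℝ}

lemma summable_indicator_sq (hx : (Function.support x).Finite) (s : Set ℕ) :
    Summable (s.indicator fun j => x j ^ 2) :=
  summable_of_hasFiniteSupport <| hx.subset fun j hj => by
    simpa using (Set.indicator_apply_ne_zero.1 hj).2

lemma segNorm_sq (x : ℕ → ℝ) (s : Set ℕ) :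
    segNorm x s ^ 2 = ∑' j, s.indicator (fun j => x j ^ 2) j :=
  Real.sq_sqrt (tsum_nonneg fun j => Set.indicator_nonneg (fun j _ => sq_nonneg (x j)) j)

lemma segNorm_nonneg (x : ℕ → ℝ) (s : Set ℕ) : 0 ≤ segNorm x s :=
  Real.sqrt_nonneg _

lemma segNorm_rpow_eq (x : ℕ → ℝ) (s : Set ℕ) (p : ℝ) :
    segNorm x s ^ p = (segNorm x s ^ 2) ^ (p / 2) := by
  rw [← Real.rpow_natCast, ← Real.rpow_mul (segNorm_nonneg x s)]
  congr 1
  ring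

lemma segNorm_congr {s t : Set ℕ} (h : ∀ j, x j ≠ 0 → (j ∈ s ↔ j ∈ t)) :
    segNorm x s = segNorm x t := by
  classical
  refine congrArg Real.sqrt <| tsum_congr fun j => ?_
  by_cases hj : x j = 0
  · simp [Set.indicator_apply, hj]
  · simp [Set.indicator_apply, h j hj]

lemma segNorm_eq_zero {s : Set ℕ} (h : ∀ j ∈ s, x j = 0) : segNorm x s = 0 := by
  rw [segNorm_congr (t := ∅) fun j hj => iff_of_false (fun hjs => hj (h j hjs)) id]
  simp [segNorm]

lemma segNorm_indicator_self (s : Set ℕ) : segNorm (s.indicator x) s = segNorm x s :=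
  congrArg Real.sqrt <| tsum_congr fun j => by by_cases hj : j ∈ s <;> simp [hj]

lemma segNorm_le_segNorm (hx : (Function.support x).Finite) {s t : Set ℕ}
    (h : ∀ j ∈ s, x j ≠ 0 → j ∈ t) : segNorm x s ≤ segNorm x t := by
  classical
  refine Real.sqrt_le_sqrt <| Summable.tsum_le_tsum (fun j => ?_)
    (summable_indicator_sq hx s) (summable_indicator_sq hx t)
  by_cases hjs : j ∈ s
  · by_cases hxj : x j = 0
    · simp [Set.indicator_apply, hxj]
    · rw [indicator_of_mem hjs, indicator_of_mem (h j hjs hxj)]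
  · rw [indicator_of_notMem hjs]
    exact Set.indicator_nonneg (fun j _ => sq_nonneg (x j)) j

lemma sum_segNorm_sq_eq_segNorm_biUnion {ι : Type*} (hx : (Function.support x).Finite)
    (J : Finset ι) {s : ι → Set ℕ} (hs : (J : Set ι).PairwiseDisjoint s) :
    ∑ k ∈ J, segNorm x (s k) ^ 2 = segNorm x (⋃ k ∈ J, s k) ^ 2 := by
  simp_rw [segNorm_sq, Finset.indicator_biUnion_apply J s hs]
  exact (Summable.tsum_finsetSum fun k _ => summable_indicator_sq hx (s k)).symm

lemma sum_segNorm_rpow_le {ι : Type*} [Fintype ι] (hx : (Function.support x).Finite) {p : ℝ}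
    (hp : 2 ≤ p) {s : ι → Set ℕ} (hs : ∀ k l, k ≠ l → Disjoint (s k) (s l)) {t : Set ℕ}
    (hst : ∀ k, s k ⊆ t) : ∑ k, segNorm x (s k) ^ p ≤ segNorm x t ^ p := by
  simp only [segNorm_rpow_eq x _ p]
  calc ∑ k, (segNorm x (s k) ^ 2) ^ (p / 2) ≤ (∑ k, segNorm x (s k) ^ 2) ^ (p / 2) :=
        Real.sum_rpow_le_rpow_sum _ (fun k _ => sq_nonneg _) (by linarith)
    _ = (segNorm x (⋃ k ∈ Finset.univ, s k) ^ 2) ^ (p / 2) := by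
        rw [sum_segNorm_sq_eq_segNorm_biUnion hx _ fun k _ l _ hkl => hs k l hkl]
    _ ≤ (segNorm x t ^ 2) ^ (p / 2) := by
        gcongr
        · exact segNorm_nonneg _ _
        · refine segNorm_le_segNorm hx fun j hj _ => ?_
          obtain ⟨k, -, hjk⟩ := Set.mem_iUnion₂.1 hj
          exact hst k hjk

end SegNorm

section Tree

variable {le : ℕ → ℕ → Prop} {σ τ : Set ℕ}

lemma IsBranch.le_of_le (hT : IsJTTree le) (hσ : IsBranch le σ) {a b : ℕ} (ha : a ∈ σ)
    (hb : b ∈ σ) (hab : a ≤ b) : le a b := by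
  rcases eq_or_ne a b with rfl | hne
  · exact hT.refl a
  · exact (hσ.1 ha hb hne).resolve_right fun hba => hne (hab.antisymm (hT.compat hba))

lemma IsBranch.mem_of_le (hT : IsJTTree le) (hσ : IsBranch le σ) {k n : ℕ} (hkn : le k n)
    (hn : n ∈ σ) : k ∈ σ := by
  have hchain : IsChain le (insert k σ) := by
    refine hσ.1.insert fun b hb _ => ?_
    rcases eq_or_ne b n with rfl | hbn
    · exact Or.inl hkn
    · rcases hσ.1 hb hn hbn with hbn' | hnb
      · exact (hT.pred_linear n b k hbn' hkn).symm
      · exact Or.inl (hT.trans hkn hnb)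
  rw [hσ.2 _ hchain (subset_insert k σ)]
  exact mem_insert k σ

lemma IsBranch.not_le_of_incompFinal (hT : IsJTTree le) (hσ : IsBranch le σ)
    (hτ : IsBranch le τ) {ρ : ℕ} (h : IncompFinal le (finalSeg σ ρ) (finalSeg τ ρ)) {k l : ℕ}
    (hk : k ∈ finalSeg σ ρ) (hl : l ∈ finalSeg τ ρ) : ¬ le k l := by
  intro hkl
  obtain ⟨hA, hB, hab, -⟩ := h
  have ha : sInf (finalSeg σ ρ) ∈ finalSeg σ ρ := Nat.sInf_mem hA
  have hb : sInf (finalSeg τ ρ) ∈ finalSeg τ ρ := Nat.sInf_mem hB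
  have hal := hT.trans (hσ.le_of_le hT ha.1 hk.1 (Nat.sInf_le hk)) hkl
  have hbl := hτ.le_of_le hT hb.1 hl.1 (Nat.sInf_le hl)
  refine (hT.pred_linear l _ _ hal hbl).elim hab fun hle => hab ?_
  -- the least element of `finalSeg τ ρ` lies below an element of `σ`, so it is in `finalSeg σ ρ`
  have hbσ : sInf (finalSeg τ ρ) ∈ finalSeg σ ρ := ⟨hσ.mem_of_le hT hle ha.1, hb.2⟩
  rw [(Nat.sInf_le hbσ).antisymm (hT.compat hle)]
  exact hT.refl _

lemma IsSegment.le_total (hT : IsJTTree le) {s : Set ℕ} (hs : IsSegment le s) {a b : ℕ}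
    (ha : a ∈ s) (hb : b ∈ s) : le a b ∨ le b a := by
  obtain ⟨m, n, -, rfl⟩ := hs
  exact hT.pred_linear n a b ha.2 hb.2

lemma IsBranch.exists_segment_covering_support (hT : IsJTTree le) (hσ : IsBranch le σ)
    {x : ℕ → ℝ} (hx : (Function.support x).Finite) {ρ : ℕ} (hxmin : ∀ i, x i ≠ 0 → ρ < i)
    (h : ∃ k ∈ σ, x k ≠ 0) :
    ∃ t, IsSegment le t ∧ t ⊆ σ ∧ (∀ k ∈ t, ρ < k) ∧ ∀ k ∈ σ, x k ≠ 0 → k ∈ t := by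
  classical
  set A := hx.toFinset.filter (· ∈ σ)
  have hA : ∀ k, k ∈ A ↔ x k ≠ 0 ∧ k ∈ σ := by simp [A]
  obtain ⟨w, hwσ, hxw⟩ := h
  have hne : A.Nonempty := ⟨w, (hA w).2 ⟨hxw, hwσ⟩⟩
  obtain ⟨hxm, hmσ⟩ := (hA _).1 (A.min'_mem hne)
  obtain ⟨-, hMσ⟩ := (hA _).1 (A.max'_mem hne)
  have hcover : ∀ k ∈ σ, x k ≠ 0 → le (A.min' hne) k ∧ le k (A.max' hne) := fun k hk hxk =>
    ⟨hσ.le_of_le hT hmσ hk (A.min'_le k ((hA k).2 ⟨hxk, hk⟩)),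
      hσ.le_of_le hT hk hMσ (A.le_max' k ((hA k).2 ⟨hxk, hk⟩))⟩
  exact ⟨{k | le (A.min' hne) k ∧ le k (A.max' hne)}, ⟨_, _, (hcover _ hmσ hxm).2, rfl⟩,
    fun k hk => hσ.mem_of_le hT hk.2 hMσ, fun k hk => (hxmin _ hxm).trans_le (hT.compat hk.1),
    hcover⟩

end Tree

lemma jtNorm_eq_of_bound_attained {ι : Type*} {le : ℕ → ℕ → Prop} {p : ℝ} (hp : 0 < p)
    {x : ℕ → ℝ} {M : ℝ}
    (hM : ∀ n (s : Fin n → Set ℕ), (∀ k, IsSegment le (s k)) →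
      (∀ k l, k ≠ l → Disjoint (s k) (s l)) → ∑ k, segNorm x (s k) ^ p ≤ M)
    (J : Finset ι) (t : ι → Set ℕ) (ht : ∀ i ∈ J, IsSegment le (t i))
    (hdisj : (J : Set ι).PairwiseDisjoint t) (hJ : ∑ i ∈ J, segNorm x (t i) ^ p = M) :
    jtNorm le p x = M ^ (1 / p) := by
  set e := J.equivFin.symm
  refine IsGreatest.csSup_eq ⟨⟨J.card, fun k => t (e k), fun k => ht _ (e k).2,
    fun k l hkl => hdisj (e k).2 (e l).2 fun h => hkl (e.injective (Subtype.ext h)), ?_⟩, ?_⟩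
  · rw [← hJ, ← Finset.sum_coe_sort J]
    exact congrArg (· ^ (1 / p)) (e.sum_comp fun i => segNorm x (t i) ^ p).symm
  · rintro r ⟨n, s, hs, hd, rfl⟩
    exact Real.rpow_le_rpow (Finset.sum_nonneg fun k _ => Real.rpow_nonneg (segNorm_nonneg _ _) p)
      (hM n s hs hd) (by positivity)

section Branches

variable {le : ℕ → ℕ → Prop} {d : ℕ} {σ : Fin d → Set ℕ} {ρ : ℕ} {x : ℕ → ℝ}

lemma eq_of_le_of_mem_finalSeg (hT : IsJTTree le) (hσ : ∀ i, IsBranch le (σ i))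
    (hinc : ∀ i j, i ≠ j → IncompFinal le (finalSeg (σ i) ρ) (finalSeg (σ j) ρ)) {i j : Fin d}
    {k l : ℕ} (hk : k ∈ finalSeg (σ i) ρ) (hl : l ∈ finalSeg (σ j) ρ) (hkl : le k l) : i = j :=
  by_contra fun hij => (hσ i).not_le_of_incompFinal hT (hσ j) (hinc i j hij) hk hl hkl

lemma segNorm_rpow_le_sum_inter_branches (hT : IsJTTree le) (hσ : ∀ i, IsBranch le (σ i))
    (hinc : ∀ i j, i ≠ j → IncompFinal le (finalSeg (σ i) ρ) (finalSeg (σ j) ρ)) {p : ℝ}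
    (hp : 0 < p) (hxmin : ∀ i, x i ≠ 0 → ρ < i) (hxsupp : ∀ k, x k ≠ 0 → ∃ i, k ∈ σ i)
    {s : Set ℕ} (hs : IsSegment le s) : segNorm x s ^ p ≤ ∑ i, segNorm x (s ∩ σ i) ^ p := by
  by_cases h : ∃ w ∈ s, x w ≠ 0
  · obtain ⟨w, hws, hxw⟩ := h
    obtain ⟨i, hwi⟩ := hxsupp w hxw
    have hsi : segNorm x s = segNorm x (s ∩ σ i) := by
      refine segNorm_congr fun u hxu => ⟨fun hus => ⟨hus, ?_⟩, And.left⟩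
      obtain ⟨j, huj⟩ := hxsupp u hxu
      have hu : u ∈ finalSeg (σ j) ρ := ⟨huj, hxmin u hxu⟩
      have hw : w ∈ finalSeg (σ i) ρ := ⟨hwi, hxmin w hxw⟩
      obtain rfl : j = i := (hs.le_total hT hus hws).elim
        (eq_of_le_of_mem_finalSeg hT hσ hinc hu hw) fun h =>
          (eq_of_le_of_mem_finalSeg hT hσ hinc hw hu h).symm
      exact huj
    rw [hsi]
    exact Finset.single_le_sum (f := fun i => segNorm x (s ∩ σ i) ^ p)
      (fun i _ => Real.rpow_nonneg (segNorm_nonneg _ _) p) (Finset.mem_univ i)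
  · push Not at h
    rw [segNorm_eq_zero h, Real.zero_rpow hp.ne']
    exact Finset.sum_nonneg fun i _ => Real.rpow_nonneg (segNorm_nonneg _ _) p

lemma sum_segNorm_rpow_le_sum_branches (hT : IsJTTree le) (hσ : ∀ i, IsBranch le (σ i))
    (hinc : ∀ i j, i ≠ j → IncompFinal le (finalSeg (σ i) ρ) (finalSeg (σ j) ρ)) {p : ℝ}
    (hp : 2 ≤ p) (hx : (Function.support x).Finite) (hxmin : ∀ i, x i ≠ 0 → ρ < i)
    (hxsupp : ∀ k, x k ≠ 0 → ∃ i, k ∈ σ i) {n : ℕ} (s : Fin n → Set ℕ)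
    (hs : ∀ k, IsSegment le (s k)) (hdisj : ∀ k l, k ≠ l → Disjoint (s k) (s l)) :
    ∑ k, segNorm x (s k) ^ p ≤ ∑ i, segNorm x (σ i) ^ p :=
  calc ∑ k, segNorm x (s k) ^ p ≤ ∑ k, ∑ i, segNorm x (s k ∩ σ i) ^ p :=
        Finset.sum_le_sum fun k _ =>
          segNorm_rpow_le_sum_inter_branches hT hσ hinc (by linarith) hxmin hxsupp (hs k)
    _ = ∑ i, ∑ k, segNorm x (s k ∩ σ i) ^ p := Finset.sum_comm
    _ ≤ ∑ i, segNorm x (σ i) ^ p := Finset.sum_le_sum fun i _ =>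
        sum_segNorm_rpow_le hx hp
          (fun k l hkl => (hdisj k l hkl).mono inter_subset_left inter_subset_left)
          fun _ => inter_subset_right

theorem jtNorm_eq_sum_segNorm_branches (hT : IsJTTree le) (hσ : ∀ i, IsBranch le (σ i))
    (hinc : ∀ i j, i ≠ j → IncompFinal le (finalSeg (σ i) ρ) (finalSeg (σ j) ρ)) {p : ℝ}
    (hp : 2 ≤ p) (hx : (Function.support x).Finite) (hxmin : ∀ i, x i ≠ 0 → ρ < i)
    (hxsupp : ∀ k, x k ≠ 0 → ∃ i, k ∈ σ i) :
    jtNorm le p x = (∑ i, segNorm x (σ i) ^ p) ^ (1 / p) := by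
  classical
  set J := Finset.univ.filter fun i => ∃ k ∈ σ i, x k ≠ 0
  choose! t htseg htσ htρ htcover using fun i (hi : i ∈ J) =>
    (hσ i).exists_segment_covering_support hT hx hxmin (Finset.mem_filter.1 hi).2
  refine jtNorm_eq_of_bound_attained (by linarith)
    (fun _ => sum_segNorm_rpow_le_sum_branches hT hσ hinc hp hx hxmin hxsupp) J t htseg ?_ ?_
  · intro i hi j hj hij
    refine Set.disjoint_left.2 fun k hki hkj => hij ?_
    exact eq_of_le_of_mem_finalSeg hT hσ hinc ⟨htσ i hi hki, htρ i hi k hki⟩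
      ⟨htσ j hj hkj, htρ j hj k hkj⟩ (hT.refl k)
  · calc ∑ i ∈ J, segNorm x (t i) ^ p = ∑ i ∈ J, segNorm x (σ i) ^ p :=
          Finset.sum_congr rfl fun i hi => by
            rw [segNorm_congr fun k hxk => ⟨fun hk => htσ i hi hk, fun hk => htcover i hi k hk hxk⟩]
      _ = ∑ i, segNorm x (σ i) ^ p := Finset.sum_subset (Finset.subset_univ J) fun i _ hi => by
          simp only [J, Finset.mem_filter, Finset.mem_univ, true_and, not_exists, not_and,
            not_not] at hi
          rw [segNorm_eq_zero hi, Real.zero_rpow (by linarith)]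

end Branches

theorem jtNorm_indicator_branch {le : ℕ → ℕ → Prop} (hT : IsJTTree le) {σ : Set ℕ}
    (hσ : IsBranch le σ) {p : ℝ} (hp : 2 ≤ p) {x : ℕ → ℝ} (hx : (Function.support x).Finite)
    {ρ : ℕ} (hxmin : ∀ i, x i ≠ 0 → ρ < i) : jtNorm le p (σ.indicator x) = segNorm x σ := by
  rw [jtNorm_eq_sum_segNorm_branches (σ := fun _ : Fin 1 => σ) hT (fun _ => hσ)
      (fun i j hij => absurd (Subsingleton.elim i j) hij) hp
      (hx.subset fun k hk => (Set.indicator_apply_ne_zero.1 hk).2)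
      (fun k hk => hxmin k (Set.indicator_apply_ne_zero.1 hk).2)
      (fun k hk => ⟨0, Set.mem_of_indicator_ne_zero hk⟩),
    Fin.sum_univ_one, segNorm_indicator_self, one_div,
    Real.rpow_rpow_inv (segNorm_nonneg _ _) (by linarith)]

theorem stmt0_general (le : ℕ → ℕ → Prop) (hT : IsJTTree le) (p : ℝ) (hp : 2 < p)
    (d : ℕ) (σ : Fin d → Set ℕ) (hσ : ∀ i, IsBranch le (σ i))
    (ρ : ℕ)
    (hinc : ∀ i j, i ≠ j → IncompFinal le (finalSeg (σ i) ρ) (finalSeg (σ j) ρ))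
    (x : ℕ → ℝ) (hxfin : (Function.support x).Finite)
    (hxmin : ∀ i, x i ≠ 0 → ρ < i)
    (hxsupp : ∀ k, x k ≠ 0 → ∃ i, k ∈ σ i) :
    jtNorm le p x = jtNorm le p (fun k => ∑ i : Fin d, ((σ i).indicator x) k) ∧
    jtNorm le p x = (∑ i : Fin d, jtNorm le p ((σ i).indicator x) ^ p) ^ (1 / p) := by
  have hsum : (fun k => ∑ i : Fin d, ((σ i).indicator x) k) = x := by
    funext k
    refine sum_indicator_apply_eq_self fun hk => ?_
    obtain ⟨i, hi⟩ := hxsupp k hk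
    exact ⟨i, hi, fun j hj => eq_of_le_of_mem_finalSeg hT hσ hinc ⟨hj, hxmin k hk⟩
      ⟨hi, hxmin k hk⟩ (hT.refl k)⟩
  refine ⟨by rw [hsum], ?_⟩
  simp_rw [jtNorm_eq_sum_segNorm_branches hT hσ hinc hp.le hxfin hxmin hxsupp,
    jtNorm_indicator_branch hT (hσ _) hp.le hxfin hxmin]

theorem stmt0 (le : ℕ → ℕ → Prop) (hT : IsJTTree le) (p : ℝ) (hp : 2 < p)
    (d : ℕ) (σ : Fin d → Set ℕ) (hσ : ∀ i, IsBranch le (σ i))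
    (hdist : Function.Injective σ) (ρ : ℕ)
    (hinc : ∀ i j, i ≠ j → IncompFinal le (finalSeg (σ i) ρ) (finalSeg (σ j) ρ))
    (x : ℕ → ℝ) (hxfin : (Function.support x).Finite)
    (hxmin : ∀ i, x i ≠ 0 → ρ < i)
    (hxsupp : ∀ k, x k ≠ 0 → ∃ i, k ∈ σ i) :
    jtNorm le p x = jtNorm le p (fun k => ∑ i : Fin d, ((σ i).indicator x) k) ∧
    jtNorm le p x = (∑ i : Fin d, jtNorm le p ((σ i).indicator x) ^ p) ^ (1 / p) :=
  stmt0_general le hT p hp d σ hσ ρ hinc x hxfin hxmin hxsupp
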